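/- Let s = 2, and for v > 0 define K₂(v) = {(x,y) ∈ ℝ² : 0 ≤ x ≤ v and x ≤ y ≤ (3/2)x}. If (α, β) is a solution of the system on an interval J with β(t) > 0 for all t ∈ J, and l ∈ J satisfies 0 < α(l) ≤ β(l) ≤ (3/2)α(l), then for every t ∈ J with t ≥ l one has (α(t), β(t)) ∈ K₂(α(l)); that is, 0 ≤ α(t) ≤ α(l) and α(t) ≤ β(t) ≤ (3/2)α(t). -/

import Mathlib

open Real Filter Set Topology
open scoped ENNReal

/-- The vector field of the spinor-flow ODE system on Berger spheres,
with parameter `s = aλ ∈ {2, -2}`. -/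
noncomputable def F (s x y : ℝ) : ℝ × ℝ :=
  (-(9/32) * x^3 / y^4 + (s/4) * x^2 / y^3 - (1/4) * x / y^2,
   (3/32) * x^2 / y^3 - (s/16) * x / y^2)

/-- `(α, β)` is a solution of the system on the set `J`, with `β` never zero. -/
def IsSolutionOn (s : ℝ) (α β : ℝ → ℝ) (J : Set ℝ) : Prop :=
  ∀ t ∈ J, β t ≠ 0 ∧
    HasDerivAt α (F s (α t) (β t)).1 t ∧
    HasDerivAt β (F s (α t) (β t)).2 t

/-! For `s = 2` each of the quantities `α`, `β - α` and `(3/2) α - β` satisfies a linear equation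
`u' = c(α, β) u` along the flow, with a coefficient `c` continuous wherever `β ≠ 0`.
Such a quantity cannot change sign: by Grönwall it vanishes identically after its first zero.
So the three inequalities cutting out `K₂` persist, and then `α' = c α ≤ 0` because the
coefficient `-(9α² - 16αβ + 8β²) / (32 β⁴)` is a negative definite form over `β⁴`. -/

theorem nonneg_of_hasDerivWithinAt_mul_self {f μ : ℝ → ℝ} {a b : ℝ}
    (hf : ContinuousOn f (Icc a b))
    (hf' : ∀ x ∈ Ico a b, HasDerivWithinAt f (μ x * f x) (Ici x) x)
    (hμ : ContinuousOn μ (Icc a b)) (ha : 0 ≤ f a) :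
    ∀ x ∈ Icc a b, 0 ≤ f x := by
  intro x hx
  by_contra! hneg
  obtain ⟨c, hc, hfc⟩ :=
    intermediate_value_Icc' hx.1 (hf.mono (Icc_subset_Icc_right hx.2)) ⟨hneg.le, ha⟩
  obtain ⟨K, hK⟩ := isCompact_Icc.exists_bound_of_continuousOn hμ
  have hzero := eq_zero_of_abs_deriv_le_mul_abs_self_of_eq_zero_right (K := K)
    (hf.mono (Icc_subset_Icc_left hc.1)) (fun y hy => hf' y ⟨hc.1.trans hy.1, hy.2⟩) hfc
    (fun y hy => by
      rw [norm_mul]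
      gcongr
      exact hK y ⟨hc.1.trans hy.1, hy.2.le⟩)
    x ⟨hc.2, hx.2⟩
  exact hneg.ne hzero

theorem F_two_fst {x y : ℝ} (hy : y ≠ 0) :
    (F 2 x y).1 = -(9 * x ^ 2 - 16 * x * y + 8 * y ^ 2) / 32 / y ^ 4 * x := by
  simp only [F]
  field_simp
  ring

theorem F_two_snd_sub_fst {x y : ℝ} (hy : y ≠ 0) :
    (F 2 x y).2 - (F 2 x y).1 = -x * (9 * x - 4 * y) / 32 / y ^ 4 * (y - x) := by
  simp only [F]
  field_simp
  ring

theorem three_halves_F_two_fst_sub_snd {x y : ℝ} (hy : y ≠ 0) :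
    3 / 2 * (F 2 x y).1 - (F 2 x y).2 = -x * (9 * x - 8 * y) / 32 / y ^ 4 * (3 / 2 * x - y) := by
  simp only [F]
  field_simp
  ring

theorem F_two_fst_nonpos {x y : ℝ} (hx : 0 ≤ x) : (F 2 x y).1 ≤ 0 := by
  rcases eq_or_ne y 0 with rfl | hy
  · simp [F]
  rw [F_two_fst hy]
  refine mul_nonpos_of_nonpos_of_nonneg (div_nonpos_of_nonpos_of_nonneg ?_ (by positivity)) hx
  nlinarith [sq_nonneg (3 * x - 8 / 3 * y), sq_nonneg y]

namespace IsSolutionOn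

variable {s : ℝ} {α β : ℝ → ℝ} {J : Set ℝ} {a b : ℝ}

theorem mono {K : Set ℝ} (hsol : IsSolutionOn s α β J) (hKJ : K ⊆ J) : IsSolutionOn s α β K :=
  fun t ht => hsol t (hKJ ht)

theorem continuousOn_fst (hsol : IsSolutionOn s α β J) : ContinuousOn α J :=
  HasDerivAt.continuousOn fun t ht => (hsol t ht).2.1

theorem continuousOn_snd (hsol : IsSolutionOn s α β J) : ContinuousOn β J :=
  HasDerivAt.continuousOn fun t ht => (hsol t ht).2.2

theorem nonneg_of_hasDerivAt_mul_self (hsol : IsSolutionOn s α β (Icc a b)) {u : ℝ → ℝ}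
    (p : ℝ → ℝ → ℝ) (hp : Continuous fun z : ℝ × ℝ => p z.1 z.2)
    (hu : ∀ x ∈ Icc a b, HasDerivAt u (p (α x) (β x) / β x ^ 4 * u x) x) (ha : 0 ≤ u a) :
    ∀ x ∈ Icc a b, 0 ≤ u x := by
  refine nonneg_of_hasDerivWithinAt_mul_self (HasDerivAt.continuousOn hu)
    (fun x hx => (hu x (Ico_subset_Icc_self hx)).hasDerivWithinAt) ?_ ha
  exact (hp.comp_continuousOn (hsol.continuousOn_fst.prodMk hsol.continuousOn_snd)).div
    (hsol.continuousOn_snd.pow 4) fun x hx => pow_ne_zero 4 (hsol x hx).1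

theorem fst_nonneg (hsol : IsSolutionOn 2 α β (Icc a b)) (ha : 0 ≤ α a) :
    ∀ x ∈ Icc a b, 0 ≤ α x :=
  hsol.nonneg_of_hasDerivAt_mul_self (fun x y => -(9 * x ^ 2 - 16 * x * y + 8 * y ^ 2) / 32)
    (by fun_prop) (fun x hx => F_two_fst (hsol x hx).1 ▸ (hsol x hx).2.1) ha

theorem fst_le_snd (hsol : IsSolutionOn 2 α β (Icc a b)) (ha : α a ≤ β a) :
    ∀ x ∈ Icc a b, α x ≤ β x := by
  have := hsol.nonneg_of_hasDerivAt_mul_self (u := fun x => β x - α x)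
    (fun x y => -x * (9 * x - 4 * y) / 32) (by fun_prop)
    (fun x hx => F_two_snd_sub_fst (hsol x hx).1 ▸ (hsol x hx).2.2.sub (hsol x hx).2.1)
    (sub_nonneg.2 ha)
  exact fun x hx => sub_nonneg.1 (this x hx)

theorem snd_le_three_halves_fst (hsol : IsSolutionOn 2 α β (Icc a b))
    (ha : β a ≤ 3 / 2 * α a) : ∀ x ∈ Icc a b, β x ≤ 3 / 2 * α x := by
  have := hsol.nonneg_of_hasDerivAt_mul_self (u := fun x => 3 / 2 * α x - β x)
    (fun x y => -x * (9 * x - 8 * y) / 32) (by fun_prop)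
    (fun x hx => three_halves_F_two_fst_sub_snd (hsol x hx).1 ▸
      ((hsol x hx).2.1.const_mul (3 / 2)).sub (hsol x hx).2.2)
    (sub_nonneg.2 ha)
  exact fun x hx => sub_nonneg.1 (this x hx)

theorem antitoneOn_fst (hsol : IsSolutionOn 2 α β J) (hJ : Convex ℝ J)
    (hα : ∀ x ∈ J, 0 ≤ α x) : AntitoneOn α J :=
  antitoneOn_of_hasDerivWithinAt_nonpos hJ hsol.continuousOn_fst
    (fun x hx => (hsol x (interior_subset hx)).2.1.hasDerivWithinAt)
    (fun x hx => F_two_fst_nonpos (hα x (interior_subset hx)))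

end IsSolutionOn

theorem trapped_in_K2 (J : Set ℝ) (hJ : J.OrdConnected) (α β : ℝ → ℝ)
    (hsol : IsSolutionOn 2 α β J)
    (l : ℝ) (hl : l ∈ J) (hαl : 0 < α l) (h1 : α l ≤ β l) (h2 : β l ≤ (3/2) * α l) :
    ∀ t ∈ J, l ≤ t →
      0 ≤ α t ∧ α t ≤ α l ∧ α t ≤ β t ∧ β t ≤ (3/2) * α t := by
  intro t ht hlt
  have hsol' : IsSolutionOn 2 α β (Icc l t) := hsol.mono (hJ.out hl ht)
  have hα := hsol'.fst_nonneg hαl.le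
  have htmem : t ∈ Icc l t := right_mem_Icc.2 hlt
  exact ⟨hα t htmem,
    hsol'.antitoneOn_fst (convex_Icc l t) hα (left_mem_Icc.2 hlt) htmem hlt,
    hsol'.fst_le_snd h1 t htmem, hsol'.snd_le_three_halves_fst h2 t htmem⟩
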